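/- For every integer vector v = (v_1,…,v_r) with 0 ≤ v_r < v_{r−1} < ⋯ < v_1 < r+k, one has Σ_{μ∈P′_k} S_μ(ζ_v)·conj(S_μ(ζ_v)) = r(r+k)^{r−1} / D(v), where P′_k := {μ ∈ P̄_k : μ_1 = k}. -/

import Mathlib

open scoped BigOperators
open Complex

noncomputable section

namespace VerlindePaper

/-- The Schur value `S_λ(z₁,…,z_r) = det(z_j^{λ_i+r-i}) / det(z_j^{r-i})`
(indices `i` are 0-based, so the exponent is `λ i + (r - 1 - i)`). -/
noncomputable def schur {r : ℕ} (lam : Fin r → ℤ) (z : Fin r → ℂ) : ℂ :=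
  Matrix.det (Matrix.of fun i j : Fin r => z j ^ (lam i + ((r : ℤ) - 1 - (i : ℕ)))) /
    Matrix.det (Matrix.of fun i j : Fin r => z j ^ ((r : ℤ) - 1 - (i : ℕ)))

/-- `ζ_v = (e^{2πi v_1/(r+k)}, …, e^{2πi v_r/(r+k)})`. -/
noncomputable def zeta (r k : ℕ) (v : Fin r → ℤ) : Fin r → ℂ :=
  fun j => Complex.exp (2 * (Real.pi : ℂ) * Complex.I * (v j : ℂ) / ((r : ℂ) + (k : ℂ)))

/-- `D(v) = ∏_{i<j} (2 sin(π(v_i - v_j)/(r+k)))²`. -/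
noncomputable def Dv (r k : ℕ) (v : Fin r → ℤ) : ℝ :=
  ∏ p ∈ Finset.univ.filter (fun p : Fin r × Fin r => p.1 < p.2),
    (2 * Real.sin (Real.pi * ((v p.1 : ℝ) - (v p.2 : ℝ)) / ((r : ℝ) + (k : ℝ)))) ^ 2

/-- `P̄_k = {μ : 0 ≤ μ_r ≤ ⋯ ≤ μ_1 ≤ k}` (0-based: `μ 0 = μ_1`). -/
def Pbar (r k : ℕ) : Finset (Fin r → ℤ) :=
  (Finset.Icc 0 (fun _ => (k : ℤ))).filter (fun μ => ∀ i j : Fin r, i ≤ j → μ j ≤ μ i)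

/-- `P_k = {μ : 0 ≤ μ_r ≤ ⋯ ≤ μ_1 ≤ k-1}`. -/
def Pk (r k : ℕ) : Finset (Fin r → ℤ) :=
  (Finset.Icc 0 (fun _ => (k : ℤ) - 1)).filter (fun μ => ∀ i j : Fin r, i ≤ j → μ j ≤ μ i)

/-- `W_k = {μ ∈ P̄_k : μ_r = 0}`. -/
def Wk (r k : ℕ) : Finset (Fin r → ℤ) :=
  (Pbar r k).filter (fun μ => ∀ i : Fin r, (i : ℕ) = r - 1 → μ i = 0)

/-- `μ* = (k - μ_r, k - μ_{r-1}, …, k - μ_1)`. -/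
def mustar (k : ℕ) {r : ℕ} (μ : Fin r → ℤ) : Fin r → ℤ :=
  fun i => (k : ℤ) - μ i.rev

/-- `μ ∼ ν` iff `μ - ν` is a constant vector. -/
def sim {r : ℕ} (μ ν : Fin r → ℤ) : Prop := ∃ a : ℤ, ∀ i, μ i = ν i + a

/-- The index set of the Verlinde sums: integer vectors with
`0 = v_r < v_{r-1} < ⋯ < v_1 < r + k`. -/
def Vset (r k : ℕ) : Finset (Fin r → ℤ) :=
  (Finset.Icc 0 (fun _ => (r : ℤ) + (k : ℤ) - 1)).filter
    (fun v => (∀ i j : Fin r, i < j → v j < v i) ∧ ∀ i : Fin r, (i : ℕ) = r - 1 → v i = 0)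

/-- The Verlinde number `V_g(r,d,(λ_x)_{x∈I})`. -/
noncomputable def verlinde (r k : ℕ) (g : ℕ) (d : ℤ) {I : Type*} [Fintype I]
    (lam : I → Fin r → ℤ) : ℂ :=
  (-1 : ℂ) ^ (d * ((r : ℤ) - 1)) * ((k : ℂ) / (r : ℂ)) ^ g *
    ((r : ℂ) * ((r : ℂ) + (k : ℂ)) ^ (r - 1)) ^ ((g : ℤ) - 1) *
    ∑ v ∈ Vset r k,
      Complex.exp (2 * (Real.pi : ℂ) * Complex.I *
          ((d : ℂ) / (r : ℂ) -
            (∑ x, ∑ i, (lam x i : ℂ)) / ((r : ℂ) * ((r : ℂ) + (k : ℂ)))) *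
          (∑ i, (v i : ℂ))) *
        (∏ x, schur (lam x) (zeta r k v)) * ((Dv r k v : ℂ)) ^ (1 - (g : ℤ))

/-- The Hecke transformation
`H¹(μ) = (k - μ_{r-1} + μ_r, μ_1 - μ_{r-1}, …, μ_{r-2} - μ_{r-1}, 0)`. -/
def H1 (k : ℕ) {r : ℕ} (μ : Fin r → ℤ) : Fin r → ℤ := fun j =>
  have hj : (j : ℕ) < r := j.isLt
  if (j : ℕ) = 0 then (k : ℤ) - μ ⟨r - 2, by omega⟩ + μ ⟨r - 1, by omega⟩
  else μ ⟨(j : ℕ) - 1, by omega⟩ - μ ⟨r - 2, by omega⟩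

/-- The iterated Hecke transformation `H^m = H¹ ∘ ⋯ ∘ H¹`. -/
def Hm (k : ℕ) {r : ℕ} (m : ℕ) (μ : Fin r → ℤ) : Fin r → ℤ := (H1 k)^[m] μ

/-- `μ ∈ Y(λ, ω_s)`: `μ` is a partition obtained from `λ` by adding `s` boxes,
no two in the same row. -/
def inY {r : ℕ} (lam : Fin r → ℤ) (s : ℕ) (μ : Fin r → ℤ) : Prop :=
  (∀ i j : Fin r, i ≤ j → μ j ≤ μ i) ∧ (∀ i, μ i - lam i = 0 ∨ μ i - lam i = 1) ∧
    (∑ i, μ i) = (∑ i, lam i) + (s : ℤ)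

/-- The Vandermonde product `Δ(z) = ∏_{i<j} (z_i - z_j)`. -/
noncomputable def vand {r : ℕ} (z : Fin r → ℂ) : ℂ :=
  ∏ p ∈ Finset.univ.filter (fun p : Fin r × Fin r => p.1 < p.2), (z p.1 - z p.2)

/-- `J_v(t) = Σ_{τ ∈ S_r} sgn(τ) exp(2πi (Σ_j v_{τ(j)} t_j)/(r+k))`. -/
noncomputable def Jv (r k : ℕ) (v : Fin r → ℤ) (t : Fin r → Fin (r + k)) : ℂ :=
  ∑ τ : Equiv.Perm (Fin r), ((Equiv.Perm.sign τ : ℤ) : ℂ) *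
    Complex.exp (2 * (Real.pi : ℂ) * Complex.I *
      (∑ j, (v (τ j) : ℂ) * ((t j : ℕ) : ℂ)) / ((r : ℂ) + (k : ℂ)))



end VerlindePaper

/-!
Put `n = r + k`. The point `x = ζ_v` is a tuple of distinct `n`-th roots of unity, and
`S_μ(x) = a_{μ+ρ}(x) / a_ρ(x)` for the alternants `a_t(x) = det (x_j ^ t_i)` and the staircase
`ρ = (r-1, …, 0)`; by Vandermonde `|a_ρ(x)|² = D(v)`. As `μ` runs over `P′_k`, the reversed exponent
`(μ + ρ) ∘ rev` runs over the strictly increasing tuples in `[0, n)` containing `n - 1`.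
Since `|a_t(x)|²` is symmetric in `t` and vanishes unless `t` is injective, `r!` times the sum over
these tuples is the sum over all `t ∈ [0, n)^r` with some `t_i = n - 1`. Splitting according to
that `i` and expanding `|a_t(x)|²` over pairs of permutations, orthogonality of the characters of
`ℤ/n` kills every off-diagonal pair, so each `i` contributes `r! n^(r-1)`.
-/

open Finset

theorem Equiv.Perm.eq_of_forall_ne_apply_eq {r : ℕ} {σ τ : Equiv.Perm (Fin r)} (i₀ : Fin r)
    (h : ∀ i, i ≠ i₀ → σ i = τ i) : σ = τ := by
  refine Equiv.ext fun i => ?_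
  by_cases hi : i = i₀
  · subst hi
    by_contra hne
    have hj : τ.symm (σ i) ≠ i := fun hj => hne (τ.symm_apply_eq.1 hj)
    have := h _ hj
    rw [τ.apply_symm_apply] at this
    exact hj (σ.injective this)
  · exact h i hi

theorem Finset.sum_filter_injective_eq_sum_strictMono_sum_perm {α β : Type*} [LinearOrder α]
    [AddCommMonoid β] {r : ℕ} (s : Finset α) (g : (Fin r → α) → β) :
    ∑ u ∈ Fintype.piFinset (fun _ => s) with Function.Injective u, g u =
      ∑ t ∈ Fintype.piFinset (fun _ => s) with StrictMono t,
        ∑ σ : Equiv.Perm (Fin r), g (t ∘ σ) := by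
  refine Eq.trans ?_
    (sum_product _ _ fun p : (Fin r → α) × Equiv.Perm (Fin r) => g (p.1 ∘ p.2))
  refine sum_nbij' (fun u => (u ∘ Tuple.sort u, (Tuple.sort u)⁻¹))
    (fun p : (Fin r → α) × Equiv.Perm (Fin r) => p.1 ∘ p.2) ?_ ?_ ?_ ?_ ?_
  · intro u hu
    simp only [mem_filter, Fintype.mem_piFinset] at hu
    simp only [mem_product, mem_filter, Fintype.mem_piFinset, mem_univ, and_true]
    exact ⟨fun i => hu.1 _, (Tuple.monotone_sort u).strictMono_of_injective
      (hu.2.comp (Tuple.sort u).injective)⟩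
  · rintro ⟨t, σ⟩ hp
    simp only [mem_product, mem_filter, Fintype.mem_piFinset, mem_univ, and_true] at hp
    simp only [mem_filter, Fintype.mem_piFinset]
    exact ⟨fun i => hp.1 _, hp.2.injective.comp σ.injective⟩
  · intro u _
    ext i
    simp
  · rintro ⟨t, σ⟩ hp
    have ht : StrictMono t := (mem_filter.1 (mem_product.1 hp).1).2
    have hsort : (t ∘ σ) ∘ Tuple.sort (t ∘ σ) = t := by
      rw [Tuple.comp_perm_comp_sort_eq_comp_sort, Tuple.sort_eq_refl_iff_monotone.2 ht.monotone]
      rfl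
    refine Prod.ext hsort (inv_eq_of_mul_eq_one_left (Equiv.ext fun i => ht.injective ?_))
    exact congrFun hsort i
  · intro u _
    simp [Function.comp_assoc]

theorem Finset.sum_piFinset_eq_factorial_smul_sum_strictMono {α β : Type*} [LinearOrder α]
    [AddCommMonoid β] {r : ℕ} (s : Finset α) (g : (Fin r → α) → β)
    (hg : ∀ t (σ : Equiv.Perm (Fin r)), g (t ∘ σ) = g t)
    (hinj : ∀ t, ¬ Function.Injective t → g t = 0) :
    ∑ t ∈ Fintype.piFinset (fun _ => s), g t =
      r.factorial • ∑ t ∈ Fintype.piFinset (fun _ => s) with StrictMono t, g t := by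
  classical
  rw [← sum_filter_of_ne fun t _ h => by_contra fun hi => h (hinj t hi),
    sum_filter_injective_eq_sum_strictMono_sum_perm, smul_sum]
  refine sum_congr rfl fun t _ => ?_
  simp [hg, Fintype.card_perm]

theorem Fin.monotone_sub_val_of_strictMono {m : ℕ} {u : Fin (m + 1) → ℤ} (hu : StrictMono u) :
    Monotone fun i => u i - (i : ℕ) :=
  Fin.monotone_iff_le_succ.2 fun i => by
    have := hu (Fin.castSucc_lt_succ (i := i))
    simp only [Fin.val_succ, Fin.val_castSucc]
    push_cast
    omega

theorem prod_filter_fst_lt_snd {M : Type*} [CommMonoid M] {r : ℕ} (f : Fin r × Fin r → M) :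
    ∏ p ∈ univ.filter (fun p : Fin r × Fin r => p.1 < p.2), f p = ∏ i, ∏ j ∈ Ioi i, f (i, j) := by
  rw [prod_filter, Fintype.prod_prod_type]
  refine prod_congr rfl fun i _ => ?_
  rw [← prod_filter]
  congr 1
  ext j
  simp

theorem sum_Ico_zpow_eq_ite {K : Type*} [DivisionRing K] [DecidableEq K] {z : K} {n : ℕ}
    (hz : z ^ n = 1) : ∑ b ∈ Ico (0 : ℤ) n, z ^ b = if z = 1 then (n : K) else 0 := by
  rw [Int.Ico_eq_finset_map, sum_map]
  split_ifs with h
  · simp [h]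
  · simpa using geom_sum_eq h n |>.trans (by simp [hz])

theorem Complex.normSq_exp_mul_I_sub_exp_mul_I (a b : ℝ) :
    normSq (exp (a * I) - exp (b * I)) = (2 * Real.sin ((a - b) / 2)) ^ 2 := by
  have h : exp (a * I) - exp (b * I) = exp (b * I) * (exp (I * ((a - b : ℝ) : ℂ)) - 1) := by
    rw [mul_sub, ← exp_add]
    push_cast
    ring_nf
  rw [normSq_eq_norm_sq, h, norm_mul, norm_exp_ofReal_mul_I, norm_exp_I_mul_ofReal_sub_one,
    one_mul, Real.norm_eq_abs, sq_abs]

section Alternant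

variable {r : ℕ}

def alternant {K : Type*} [Field K] (x : Fin r → K) (t : Fin r → ℤ) : K :=
  (Matrix.of fun i j => x j ^ t i).det

def strictMonoTuplesContaining (r n : ℕ) (c : ℤ) : Finset (Fin r → ℤ) :=
  {t ∈ Fintype.piFinset fun _ => Ico (0 : ℤ) n | StrictMono t ∧ ∃ i, t i = c}

def staircase (r : ℕ) : Fin r → ℤ := fun i => (r : ℤ) - 1 - (i : ℕ)

theorem staircase_eq_val_rev (i : Fin r) : staircase r i = (i.rev : ℕ) := by
  simp only [staircase, Fin.val_rev]
  omega

theorem alternant_comp_perm {K : Type*} [Field K] (x : Fin r → K) (t : Fin r → ℤ)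
    (σ : Equiv.Perm (Fin r)) : alternant x (t ∘ σ) = Equiv.Perm.sign σ * alternant x t := by
  rw [alternant, alternant, ← Matrix.det_permute]
  rfl

theorem alternant_eq_zero_of_not_injective {K : Type*} [Field K] (x : Fin r → K)
    {t : Fin r → ℤ} (ht : ¬ Function.Injective t) : alternant x t = 0 := by
  obtain ⟨i, j, hij, hne⟩ := Function.not_injective_iff.1 ht
  exact Matrix.det_zero_of_row_eq hne (funext fun l => by simp [hij])

theorem normSq_alternant_comp_perm (x : Fin r → ℂ) (t : Fin r → ℤ) (σ : Equiv.Perm (Fin r)) :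
    normSq (alternant x (t ∘ σ)) = normSq (alternant x t) := by
  rcases Int.units_eq_one_or (Equiv.Perm.sign σ) with h | h <;>
    simp [alternant_comp_perm, h]

theorem normSq_alternant_staircase (x : Fin r → ℂ) :
    normSq (alternant x (staircase r)) = ∏ i, ∏ j ∈ Ioi i, normSq (x j - x i) := by
  have hst : staircase r = (fun i : Fin r => ((i : ℕ) : ℤ)) ∘ Fin.revPerm :=
    funext staircase_eq_val_rev
  have hvdm : alternant x (fun i => ((i : ℕ) : ℤ)) = (Matrix.vandermonde x).det := by
    rw [alternant, ← Matrix.det_transpose]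
    congr 1
  rw [hst, normSq_alternant_comp_perm, hvdm, Matrix.det_vandermonde, map_prod]
  simp only [map_prod]

theorem Complex.ofReal_normSq_alternant (x : Fin r → ℂ) (hx : ∀ j, ‖x j‖ = 1) (t : Fin r → ℤ) :
    (normSq (alternant x t) : ℂ) = ∑ σ : Equiv.Perm (Fin r), ∑ τ : Equiv.Perm (Fin r),
      Equiv.Perm.sign σ * Equiv.Perm.sign τ * ∏ i, (x (σ i) / x (τ i)) ^ t i := by
  have hdet : alternant x t = ∑ σ : Equiv.Perm (Fin r),
      Equiv.Perm.sign σ * ∏ i, x (σ i) ^ t i := by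
    rw [alternant, ← Matrix.det_transpose, Matrix.det_apply']
    rfl
  have hconj : ∀ j, (starRingEnd ℂ) (x j) = (x j)⁻¹ := fun j => (inv_eq_conj (hx j)).symm
  rw [← mul_conj, hdet, map_sum, Finset.sum_mul_sum]
  refine sum_congr rfl fun σ _ => sum_congr rfl fun τ _ => ?_
  simp only [map_mul, map_prod, map_zpow₀, hconj, map_intCast, div_eq_mul_inv, mul_zpow,
    prod_mul_distrib]
  ring

theorem sum_normSq_alternant_filter_apply_eq {n : ℕ} (hn : n ≠ 0) (x : Fin r → ℂ)
    (hx : ∀ j, x j ^ n = 1) (hinj : Function.Injective x) (i₀ : Fin r) {c : ℤ}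
    (hc : c ∈ Ico (0 : ℤ) n) :
    ∑ t ∈ Fintype.piFinset (fun _ => Ico (0 : ℤ) n) with t i₀ = c, normSq (alternant x t) =
      r.factorial * n ^ (r - 1) := by
  classical
  set S : Fin r → Finset ℤ := Function.update (fun _ => Ico (0 : ℤ) n) i₀ {c} with hSdef
  have hS : (Fintype.piFinset fun _ => Ico (0 : ℤ) n).filter (fun t => t i₀ = c) =
      Fintype.piFinset S :=
    (Fintype.piFinset_update_singleton_eq_filter_piFinset_eq (fun _ : Fin r => Ico (0 : ℤ) n)
      i₀ hc).symm
  have hx0 : ∀ j, x j ≠ 0 := fun j h => zero_ne_one (α := ℂ) (by simpa [h, zero_pow hn] using hx j)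
  have orth : ∀ σ τ : Equiv.Perm (Fin r), ∑ t ∈ Fintype.piFinset S,
      ∏ i, (x (σ i) / x (τ i)) ^ t i = if σ = τ then (n : ℂ) ^ (r - 1) else 0 := by
    intro σ τ
    split_ifs with hστ
    · subst hστ
      simp only [div_self (hx0 _), one_zpow, prod_const_one, sum_const, nsmul_eq_mul, mul_one]
      rw [← hS, Fintype.card_filter_piFinset_const_eq_of_mem _ _ hc]
      simp
    · obtain ⟨i, hi, hne⟩ : ∃ i, i ≠ i₀ ∧ σ i ≠ τ i := by
        by_contra! h
        exact hστ (Equiv.Perm.eq_of_forall_ne_apply_eq i₀ h)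
      rw [← prod_univ_sum]
      refine prod_eq_zero (mem_univ i) ?_
      have hroot : (x (σ i) / x (τ i)) ^ n = 1 := by rw [div_pow, hx, hx, div_one]
      rw [hSdef, Function.update_of_ne hi, sum_Ico_zpow_eq_ite hroot,
        if_neg fun h => hne (hinj ((div_eq_one_iff_eq (hx0 _)).1 h))]
  have hsign : ∀ σ : Equiv.Perm (Fin r), (Equiv.Perm.sign σ * Equiv.Perm.sign σ : ℂ) = 1 :=
    fun σ => by rw [← Int.cast_mul, ← Units.val_mul, Int.units_mul_self]; simp
  apply ofReal_injective
  push_cast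
  simp_rw [hS, ofReal_normSq_alternant x (fun j => norm_eq_one_of_pow_eq_one (hx j) hn)]
  calc ∑ t ∈ Fintype.piFinset S, ∑ σ : Equiv.Perm (Fin r), ∑ τ : Equiv.Perm (Fin r),
        (Equiv.Perm.sign σ * Equiv.Perm.sign τ : ℂ) * ∏ i, (x (σ i) / x (τ i)) ^ t i
      = ∑ σ : Equiv.Perm (Fin r), ∑ τ : Equiv.Perm (Fin r),
          (Equiv.Perm.sign σ * Equiv.Perm.sign τ : ℂ) *
            ∑ t ∈ Fintype.piFinset S, ∏ i, (x (σ i) / x (τ i)) ^ t i := by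
        rw [sum_comm]
        simp_rw [mul_sum]
        exact sum_congr rfl fun σ _ => sum_comm
    _ = r.factorial * n ^ (r - 1) := by simp [orth, hsign, Fintype.card_perm]

theorem sum_normSq_alternant_strictMono {n : ℕ} (hn : n ≠ 0) (x : Fin r → ℂ)
    (hx : ∀ j, x j ^ n = 1) (hinj : Function.Injective x) {c : ℤ} (hc : c ∈ Ico (0 : ℤ) n) :
    ∑ t ∈ strictMonoTuplesContaining r n c, normSq (alternant x t) = r * n ^ (r - 1) := by
  classical
  set g : (Fin r → ℤ) → ℝ := fun t => if ∃ i, t i = c then normSq (alternant x t) else 0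
  have hsort := sum_piFinset_eq_factorial_smul_sum_strictMono (Ico (0 : ℤ) n) g
    (fun t σ => by
      have hrange : (∃ i, (t ∘ σ) i = c) ↔ ∃ i, t i = c := σ.exists_congr_left.trans (by simp)
      simp only [g, hrange, normSq_alternant_comp_perm])
    (fun t ht => by simp [g, alternant_eq_zero_of_not_injective x ht])
  -- an injective `t` takes the value `c` at most once
  have hsplit : ∀ t, g t = ∑ i, if t i = c then normSq (alternant x t) else 0 := by
    intro t
    by_cases ht : Function.Injective t
    · by_cases hc' : ∃ i, t i = c
      · obtain ⟨i₀, rfl⟩ := hc'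
        simp [g, ht.eq_iff]
      · push Not at hc'
        simp [g, hc']
    · simp [g, alternant_eq_zero_of_not_injective x ht]
  have hcount : ∑ t ∈ Fintype.piFinset (fun _ => Ico (0 : ℤ) n), g t =
      r * (r.factorial * n ^ (r - 1)) := by
    calc _ = ∑ t ∈ Fintype.piFinset (fun _ => Ico (0 : ℤ) n), ∑ i,
            if t i = c then normSq (alternant x t) else 0 := sum_congr rfl fun t _ => hsplit t
      _ = ∑ i, ∑ t ∈ Fintype.piFinset (fun _ => Ico (0 : ℤ) n) with t i = c,
            normSq (alternant x t) := by
          rw [sum_comm]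
          exact sum_congr rfl fun i _ => (sum_filter _ _).symm
      _ = r * (r.factorial * n ^ (r - 1)) := by
          simp [sum_normSq_alternant_filter_apply_eq hn x hx hinj _ hc]
  have hfilter : ∑ t ∈ Fintype.piFinset (fun _ => Ico (0 : ℤ) n) with StrictMono t, g t =
      ∑ t ∈ strictMonoTuplesContaining r n c, normSq (alternant x t) := by
    rw [strictMonoTuplesContaining, ← filter_filter]
    exact (sum_filter _ _).symm
  rw [hcount, hfilter, nsmul_eq_mul] at hsort
  refine mul_left_cancel₀ (Nat.cast_ne_zero.2 r.factorial_ne_zero : (r.factorial : ℝ) ≠ 0) ?_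
  linear_combination -hsort

end Alternant

namespace VerlindePaper

def Pprime (r k : ℕ) : Finset (Fin r → ℤ) :=
  (Pbar r k).filter fun μ => ∀ i : Fin r, (i : ℕ) = 0 → μ i = (k : ℤ)

theorem schur_eq_alternant_div {r : ℕ} (μ : Fin r → ℤ) (x : Fin r → ℂ) :
    schur μ x = alternant x (μ + staircase r) / alternant x (staircase r) :=
  rfl

theorem comp_rev_mem_of_mem_Pprime {m k : ℕ} {μ : Fin (m + 1) → ℤ} (hμ : μ ∈ Pprime (m + 1) k) :
    (μ + staircase (m + 1)) ∘ Fin.rev ∈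
      strictMonoTuplesContaining (m + 1) (m + 1 + k) ((m + 1 + k : ℕ) - 1) := by
  simp only [Pprime, Pbar, mem_filter, mem_Icc, Pi.le_def, Pi.zero_apply] at hμ
  obtain ⟨⟨⟨h0, hk⟩, hanti⟩, htop⟩ := hμ
  simp only [strictMonoTuplesContaining, mem_filter, Fintype.mem_piFinset, mem_Ico,
    Function.comp_apply, Pi.add_apply, staircase_eq_val_rev, Fin.rev_rev]
  refine ⟨fun i => ⟨by linarith [h0 i.rev], ?_⟩, fun i j hij => ?_, Fin.last m, ?_⟩
  · have := hk i.rev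
    have := i.isLt
    push_cast
    omega
  · simp only [Function.comp_apply, Pi.add_apply, staircase_eq_val_rev, Fin.rev_rev]
    have := hanti j.rev i.rev (Fin.rev_le_rev.2 hij.le)
    have : (i : ℕ) < j := hij
    omega
  · rw [Fin.rev_last, htop 0 rfl]
    push_cast
    ring

theorem comp_rev_sub_staircase_mem_Pprime {m k : ℕ} {u : Fin (m + 1) → ℤ}
    (hu : u ∈ strictMonoTuplesContaining (m + 1) (m + 1 + k) ((m + 1 + k : ℕ) - 1)) :
    u ∘ Fin.rev - staircase (m + 1) ∈ Pprime (m + 1) k := by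
  simp only [strictMonoTuplesContaining, mem_filter, Fintype.mem_piFinset, mem_Ico] at hu
  obtain ⟨hbox, hmono, i₀, hi₀⟩ := hu
  have hw := Fin.monotone_sub_val_of_strictMono hmono
  have hlast : u (Fin.last m) = ((m + 1 + k : ℕ) : ℤ) - 1 :=
    le_antisymm (by linarith [(hbox (Fin.last m)).2]) (hi₀ ▸ hmono.monotone (Fin.le_last i₀))
  simp only [Pprime, Pbar, mem_filter, mem_Icc, Pi.le_def, Pi.zero_apply, Pi.sub_apply,
    Function.comp_apply, staircase_eq_val_rev]
  refine ⟨⟨⟨fun i => ?_, fun i => ?_⟩, fun i j hij => hw (Fin.rev_le_rev.2 hij)⟩, fun i hi => ?_⟩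
  · have := hw (Fin.zero_le i.rev)
    simp only [Fin.val_zero, CharP.cast_eq_zero, sub_zero] at this
    linarith [(hbox 0).1]
  · have := hw (Fin.le_last i.rev)
    simp only [Fin.val_last] at this
    push_cast at hlast
    omega
  · obtain rfl : i = 0 := Fin.ext hi
    simp only [Fin.rev_zero, hlast, Fin.val_last]
    push_cast
    ring

theorem sum_Pprime_eq_sum_strictMono {β : Type*} [AddCommMonoid β] (m k : ℕ)
    (F : (Fin (m + 1) → ℤ) → β) :
    ∑ μ ∈ Pprime (m + 1) k, F (μ + staircase (m + 1)) =
      ∑ u ∈ strictMonoTuplesContaining (m + 1) (m + 1 + k) ((m + 1 + k : ℕ) - 1),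
        F (u ∘ Fin.rev) := by
  refine sum_nbij' (fun μ => (μ + staircase (m + 1)) ∘ Fin.rev)
    (fun u => u ∘ Fin.rev - staircase (m + 1)) (fun μ => comp_rev_mem_of_mem_Pprime)
    (fun u => comp_rev_sub_staircase_mem_Pprime) (fun μ _ => ?_) (fun u _ => ?_) (fun μ _ => ?_)
  · ext i
    simp
  · ext i
    simp
  · simp only [Function.comp_def, Fin.rev_rev]

theorem normSq_alternant_zeta_staircase (r k : ℕ) (v : Fin r → ℤ) :
    normSq (alternant (zeta r k v) (staircase r)) = Dv r k v := by
  have hzeta : ∀ j, zeta r k v j =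
      exp ((2 * Real.pi * v j / (r + k) : ℝ) * I) := fun j => by
    simp only [zeta]
    push_cast
    ring_nf
  rw [normSq_alternant_staircase, Dv, prod_filter_fst_lt_snd]
  refine prod_congr rfl fun i _ => prod_congr rfl fun j _ => ?_
  rw [hzeta, hzeta, normSq_exp_mul_I_sub_exp_mul_I, ← neg_sq, ← mul_neg, ← Real.sin_neg]
  congr 3
  ring

theorem zeta_eq_zpow (r k : ℕ) (v : Fin r → ℤ) (j : Fin r) :
    zeta r k v j = exp (2 * Real.pi * I / (r + k : ℕ)) ^ v j := by
  rw [zeta, ← exp_int_mul]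
  push_cast
  ring_nf

theorem zeta_pow_eq_one (r k : ℕ) (v : Fin r → ℤ) (j : Fin r) : zeta r k v j ^ (r + k) = 1 := by
  have hω := isPrimitiveRoot_exp (r + k) (by have := j.pos; omega)
  rw [zeta_eq_zpow, ← zpow_natCast, ← zpow_mul, mul_comm (v j), zpow_mul, zpow_natCast,
    hω.pow_eq_one, one_zpow]

theorem zeta_injective {r k : ℕ} {v : Fin r → ℤ} (hv : Function.Injective v)
    (hlow : ∀ i, 0 ≤ v i) (hhigh : ∀ i, v i < (r : ℤ) + (k : ℤ)) :
    Function.Injective (zeta r k v) := by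
  intro i j h
  have hn : r + k ≠ 0 := by have := i.pos; omega
  have hω := isPrimitiveRoot_exp (r + k) hn
  rw [zeta_eq_zpow, zeta_eq_zpow] at h
  have hdvd : ((r + k : ℕ) : ℤ) ∣ v i - v j := by
    rw [← hω.zpow_eq_one_iff_dvd, zpow_sub₀ (hω.ne_zero hn), h,
      div_self (zpow_ne_zero _ (hω.ne_zero hn))]
  refine hv (sub_eq_zero.1 (Int.eq_zero_of_abs_lt_dvd hdvd ?_))
  rw [abs_lt]
  push_cast
  constructor <;> linarith [hlow i, hlow j, hhigh i, hhigh j]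

theorem sum_P'_schur_normSq_general (r k : ℕ) (hr : 1 ≤ r)
    (v : Fin r → ℤ) (hdec : ∀ i j : Fin r, i < j → v j < v i)
    (hlow : ∀ i, 0 ≤ v i) (hhigh : ∀ i, v i < (r : ℤ) + (k : ℤ)) :
    ∑ μ ∈ (Pbar r k).filter (fun μ => ∀ i : Fin r, (i : ℕ) = 0 → μ i = (k : ℤ)),
        schur μ (zeta r k v) * (starRingEnd ℂ) (schur μ (zeta r k v)) =
      (r : ℂ) * ((r : ℂ) + (k : ℂ)) ^ (r - 1) / ((Dv r k v : ℝ) : ℂ) := by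
  obtain ⟨m, rfl⟩ : ∃ m, r = m + 1 := ⟨r - 1, by omega⟩
  set x := zeta (m + 1) k v
  have hschur : ∀ μ, schur μ x * (starRingEnd ℂ) (schur μ x) =
      ((normSq (alternant x (μ + staircase (m + 1))) / Dv (m + 1) k v : ℝ) : ℂ) := by
    intro μ
    rw [mul_conj, schur_eq_alternant_div, map_div₀, normSq_alternant_zeta_staircase]
  have hcount := sum_normSq_alternant_strictMono (by omega) x (zeta_pow_eq_one _ k v)
    (zeta_injective (StrictAnti.injective hdec) hlow hhigh)
    (c := ((m + 1 + k : ℕ) : ℤ) - 1) (by rw [mem_Ico]; omega)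
  change ∑ μ ∈ Pprime (m + 1) k, _ = _
  simp_rw [hschur]
  rw [← ofReal_sum, ← sum_div, sum_Pprime_eq_sum_strictMono m k
    (fun t => normSq (alternant x t))]
  have hrev : ∀ u, normSq (alternant x (u ∘ Fin.rev)) = normSq (alternant x u) :=
    fun u => normSq_alternant_comp_perm x u Fin.revPerm
  simp only [hrev]
  rw [hcount]
  push_cast
  ring

/-- summing over `P′_k = {μ ∈ P̄_k : μ_1 = k}` gives `r(r+k)^{r-1}/D(v)`. -/
theorem sum_P'_schur_normSq (r k : ℕ) (hr : 1 ≤ r) (hk : 1 ≤ k)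
    (v : Fin r → ℤ) (hdec : ∀ i j : Fin r, i < j → v j < v i)
    (hlow : ∀ i, 0 ≤ v i) (hhigh : ∀ i, v i < (r : ℤ) + (k : ℤ)) :
    ∑ μ ∈ (Pbar r k).filter (fun μ => ∀ i : Fin r, (i : ℕ) = 0 → μ i = (k : ℤ)),
        schur μ (zeta r k v) * (starRingEnd ℂ) (schur μ (zeta r k v)) =
      (r : ℂ) * ((r : ℂ) + (k : ℂ)) ^ (r - 1) / ((Dv r k v : ℝ) : ℂ) :=
  sum_P'_schur_normSq_general r k hr v hdec hlow hhigh

end VerlindePaper
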